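/- arXiv:1611.00989 — 3 statements merged into one kernel-verified Lean document; each statement's English description precedes it below -/
import Mathlib

section
/- Let n ≥ 2, let ρ : ℝⁿ → ℝ be of class C³ and let k : ℝ → ℝ be of class C². Then at every point of ℝⁿ the divergence of the general Korteweg capillary tensor satisfies the identity ∇( ρ k(ρ) Δρ + (1/2)(k(ρ) + ρ k'(ρ)) |∇ρ|² ) − div( k(ρ) ∇ρ ⊗ ∇ρ ) = ρ ∇( k(ρ) Δρ + (1/2) k'(ρ) |∇ρ|² ). -/
open scoped BigOperators
open MeasureTheory

/-- Partial derivative `∂ᵢ f` of a scalar function at a point `x`. -/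
noncomputable def pd {n : ℕ} (i : Fin n) (f : (Fin n → ℝ) → ℝ) (x : Fin n → ℝ) : ℝ :=
  fderiv ℝ f x (Pi.single i 1)

/-- Gradient of a scalar function. -/
noncomputable def grad {n : ℕ} (f : (Fin n → ℝ) → ℝ) (x : Fin n → ℝ) : Fin n → ℝ :=
  fun i => pd i f x

/-- Laplacian of a scalar function. -/
noncomputable def lap {n : ℕ} (f : (Fin n → ℝ) → ℝ) (x : Fin n → ℝ) : ℝ :=
  ∑ i, pd i (pd i f) x

/-- Squared euclidean norm of the gradient, `|∇f|² = ∑ᵢ (∂ᵢf)²`. -/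
noncomputable def gradNormSq {n : ℕ} (f : (Fin n → ℝ) → ℝ) (x : Fin n → ℝ) : ℝ :=
  ∑ i, (pd i f x) ^ 2

/-- Divergence of a matrix-valued field: `(matDiv M x)ᵢ = ∑ⱼ ∂ⱼ Mⱼᵢ`. -/
noncomputable def matDiv {n : ℕ} (M : (Fin n → ℝ) → Matrix (Fin n) (Fin n) ℝ)
    (x : Fin n → ℝ) : Fin n → ℝ :=
  fun i => ∑ j, pd j (fun y => M y j i) x

/-- Divergence of a vector field: `vecDiv F x = ∑ᵢ ∂ᵢ Fᵢ`. -/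
noncomputable def vecDiv {n : ℕ} (F : (Fin n → ℝ) → (Fin n → ℝ)) (x : Fin n → ℝ) : ℝ :=
  ∑ i, pd i (fun y => F y i) x

/-- Jacobian matrix of a vector field: `(jacM F x)ᵢⱼ = ∂ⱼ Fᵢ`. -/
noncomputable def jacM {n : ℕ} (F : (Fin n → ℝ) → (Fin n → ℝ)) (x : Fin n → ℝ) :
    Matrix (Fin n) (Fin n) ℝ :=
  Matrix.of fun i j => pd j (fun y => F y i) x

/-!
With `Φ = k(ρ)Δρ + ½k'(ρ)|∇ρ|²`, the scalar potential on the left is `ρΦ + ½k(ρ)|∇ρ|²`, so by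
the product rule its gradient is `ρ∇Φ + (kΔρ + ½k'|∇ρ|²)∇ρ + ½∇(k|∇ρ|²)`. The divergence of
`g ∇ρ⊗∇ρ` is `(∇g·∇ρ + gΔρ)∇ρ + ½g∇|∇ρ|²`, the last term by symmetry of second derivatives;
for `g = k(ρ)` this cancels everything but `ρ∇Φ`.
-/

section PartialDerivatives

variable {n : ℕ} {f g : (Fin n → ℝ) → ℝ} {x : Fin n → ℝ}

lemma pd_add (i : Fin n) (hf : DifferentiableAt ℝ f x) (hg : DifferentiableAt ℝ g x) :
    pd i (fun y => f y + g y) x = pd i f x + pd i g x := by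
  simp [pd, fderiv_fun_add hf hg]

lemma pd_mul (i : Fin n) (hf : DifferentiableAt ℝ f x) (hg : DifferentiableAt ℝ g x) :
    pd i (fun y => f y * g y) x = pd i f x * g x + f x * pd i g x := by
  simp only [pd, fderiv_fun_mul hf hg, add_apply, smul_apply, smul_eq_mul]
  ring

lemma pd_const_mul (i : Fin n) (c : ℝ) (hf : DifferentiableAt ℝ f x) :
    pd i (fun y => c * f y) x = c * pd i f x := by
  simp [pd, fderiv_const_mul hf]

lemma pd_sum {ι : Type*} (s : Finset ι) {F : ι → (Fin n → ℝ) → ℝ} (i : Fin n)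
    (hF : ∀ j ∈ s, DifferentiableAt ℝ (F j) x) :
    pd i (fun y => ∑ j ∈ s, F j y) x = ∑ j ∈ s, pd i (F j) x := by
  simp [pd, fderiv_fun_sum hF]

lemma pd_comp {k : ℝ → ℝ} (i : Fin n) (hk : DifferentiableAt ℝ k (f x))
    (hf : DifferentiableAt ℝ f x) :
    pd i (fun y => k (f y)) x = deriv k (f x) * pd i f x := by
  have h : HasFDerivAt (fun y => k (f y)) (deriv k (f x) • fderiv ℝ f x) x :=
    hk.hasDerivAt.comp_hasFDerivAt x hf.hasFDerivAt
  simp [pd, h.fderiv]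

lemma grad_comp {k : ℝ → ℝ} (hk : DifferentiableAt ℝ k (f x)) (hf : DifferentiableAt ℝ f x) :
    grad (fun y => k (f y)) x = deriv k (f x) • grad f x := by
  ext i
  exact pd_comp i hk hf

lemma grad_dotProduct_self : grad f x ⬝ᵥ grad f x = gradNormSq f x := by
  simp [dotProduct, gradNormSq, grad, sq]

lemma contDiff_pd {N m : WithTop ℕ∞} (hf : ContDiff ℝ N f) (h : m + 1 ≤ N) (i : Fin n) :
    ContDiff ℝ m (pd i f) := by
  exact (ContinuousLinearMap.apply ℝ ℝ (Pi.single i 1)).contDiff.comp (hf.fderiv_right h)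

lemma contDiff_gradNormSq {N m : WithTop ℕ∞} (hf : ContDiff ℝ N f) (h : m + 1 ≤ N) :
    ContDiff ℝ m (gradNormSq f) :=
  ContDiff.sum fun i _ => (contDiff_pd hf h i).pow 2

lemma contDiff_lap {N m : WithTop ℕ∞} (hf : ContDiff ℝ N f) (h : m + 2 ≤ N) :
    ContDiff ℝ m (lap f) := by
  refine ContDiff.sum fun i _ => contDiff_pd (contDiff_pd hf ?_ i) le_rfl i
  calc m + 1 + 1 = m + 2 := by rw [add_assoc]; norm_num
    _ ≤ N := h

lemma pd_pd_comm (hf : ContDiff ℝ 2 f) (i j : Fin n) :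
    pd j (pd i f) x = pd i (pd j f) x := by
  have hdf : DifferentiableAt ℝ (fderiv ℝ f) x :=
    (hf.fderiv_right (m := 1) le_rfl).differentiable one_ne_zero x
  have h (i j : Fin n) :
      pd j (pd i f) x = fderiv ℝ (fderiv ℝ f) x (Pi.single j 1) (Pi.single i 1) := by
    change fderiv ℝ (fun y => fderiv ℝ f y (Pi.single i 1)) x (Pi.single j 1) = _
    simp [fderiv_clm_apply hdf (differentiableAt_const _)]
  rw [h, h]
  exact hf.contDiffAt.isSymmSndFDerivAt (by simp) _ _

lemma pd_gradNormSq (hf : ContDiff ℝ 2 f) (i : Fin n) :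
    pd i (gradNormSq f) x = 2 * ∑ j, pd j f x * pd j (pd i f) x := by
  have hd (j : Fin n) : DifferentiableAt ℝ (pd j f) x :=
    (contDiff_pd hf le_rfl j).differentiable one_ne_zero x
  change pd i (fun y => ∑ j, pd j f y ^ 2) x = _
  rw [pd_sum (F := fun j y => pd j f y ^ 2) _ _ fun j _ => (hd j).pow 2, Finset.mul_sum]
  refine Finset.sum_congr rfl fun j _ => ?_
  simp only [sq, pd_mul i (hd j) (hd j), pd_pd_comm hf j i]
  ring

lemma matDiv_mul_pd_mul_pd (hg : DifferentiableAt ℝ g x) (hf : ContDiff ℝ 2 f) (i : Fin n) :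
    matDiv (fun y => Matrix.of fun j l => g y * pd j f y * pd l f y) x i
      = (grad g x ⬝ᵥ grad f x + g x * lap f x) * pd i f x
        + g x / 2 * pd i (gradNormSq f) x := by
  have hd (j : Fin n) : DifferentiableAt ℝ (pd j f) x :=
    (contDiff_pd hf le_rfl j).differentiable one_ne_zero x
  have hdd (j : Fin n) : pd j (fun y => g y * pd j f y * pd i f y) x
      = (pd j g x * pd j f x + g x * pd j (pd j f) x) * pd i f x
        + g x * (pd j f x * pd j (pd i f) x) := by
    rw [pd_mul j (hg.fun_mul (hd j)) (hd i), pd_mul j hg (hd j)]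
    ring
  simp only [matDiv, Matrix.of_apply, hdd, Finset.sum_add_distrib, ← Finset.sum_mul,
    ← Finset.mul_sum, pd_gradNormSq hf]
  simp only [dotProduct, grad, lap]
  ring

end PartialDerivatives

theorem korteweg_tensor_divergence_general {n : ℕ}
    (ρ : (Fin n → ℝ) → ℝ) (k : ℝ → ℝ)
    (hρ : ContDiff ℝ 3 ρ) (hk : ContDiff ℝ 2 k)
    (x : Fin n → ℝ) (i : Fin n) :
    grad (fun y => ρ y * k (ρ y) * lap ρ y
        + (1 / 2) * (k (ρ y) + ρ y * deriv k (ρ y)) * gradNormSq ρ y) x i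
      - matDiv (fun y => Matrix.of fun j i' => k (ρ y) * pd j ρ y * pd i' ρ y) x i
    = ρ x * grad (fun y => k (ρ y) * lap ρ y
        + (1 / 2) * deriv k (ρ y) * gradNormSq ρ y) x i := by
  have dρ : DifferentiableAt ℝ ρ x := hρ.differentiable (by norm_num) x
  have dk : DifferentiableAt ℝ k (ρ x) := hk.differentiable (by norm_num) _
  have dk' : DifferentiableAt ℝ (deriv k) (ρ x) := hk.deriv'.differentiable one_ne_zero _
  have dL : DifferentiableAt ℝ (lap ρ) x :=
    (contDiff_lap (m := 1) hρ (by norm_num)).differentiable one_ne_zero x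
  have dS : DifferentiableAt ℝ (gradNormSq ρ) x :=
    (contDiff_gradNormSq (m := 1) hρ (by norm_num)).differentiable one_ne_zero x
  have split : (fun y => ρ y * k (ρ y) * lap ρ y
        + (1 / 2) * (k (ρ y) + ρ y * deriv k (ρ y)) * gradNormSq ρ y)
      = fun y => ρ y * (k (ρ y) * lap ρ y + (1 / 2) * deriv k (ρ y) * gradNormSq ρ y)
        + (1 / 2) * (k (ρ y) * gradNormSq ρ y) := by
    funext y; ring
  simp only [grad]
  rw [split, pd_add, pd_mul, pd_const_mul, pd_mul, pd_comp i dk dρ,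
    matDiv_mul_pd_mul_pd _ (hρ.of_le (by norm_num)), grad_comp dk dρ, smul_dotProduct,
    grad_dotProduct_self]
  · simp only [smul_eq_mul]
    ring
  all_goals fun_prop

/-- the divergence of the general Korteweg capillary tensor satisfies
`∇(ρ k(ρ) Δρ + ½(k(ρ)+ρk'(ρ))|∇ρ|²) − div(k(ρ)∇ρ⊗∇ρ) = ρ ∇(k(ρ)Δρ + ½ k'(ρ)|∇ρ|²)`. -/
theorem korteweg_tensor_divergence {n : ℕ} (hn : 2 ≤ n)
    (ρ : (Fin n → ℝ) → ℝ) (k : ℝ → ℝ)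
    (hρ : ContDiff ℝ 3 ρ) (hk : ContDiff ℝ 2 k)
    (x : Fin n → ℝ) (i : Fin n) :
    grad (fun y => ρ y * k (ρ y) * lap ρ y
        + (1 / 2) * (k (ρ y) + ρ y * deriv k (ρ y)) * gradNormSq ρ y) x i
      - matDiv (fun y => Matrix.of fun j i' => k (ρ y) * pd j ρ y * pd i' ρ y) x i
    = ρ x * grad (fun y => k (ρ y) * lap ρ y
        + (1 / 2) * deriv k (ρ y) * gradNormSq ρ y) x i :=
  korteweg_tensor_divergence_general ρ k hρ hk x i
end

section
/- (Liouville formula for the Jacobian of a flow.) Let n ≥ 2, T > 0, and let u : [0,T] × ℝⁿ → ℝⁿ be continuous and continuously differentiable with respect to x, with spatial Jacobian Dₓu continuous on [0,T] × ℝⁿ. Let X : [0,T] × ℝⁿ → ℝⁿ be a flow of u which is C¹ in x, such that (t,x) ↦ DₓX(t,x) is continuous and for each x the map t ↦ DₓX(t,x) is differentiable with ∂ₜDₓX(t,x) = Dₓu(t, X(t,x)) · DₓX(t,x). Then for all (t,x) ∈ [0,T] × ℝⁿ, det DₓX(t,x) = exp( ∫₀ᵗ (div u)(τ, X(τ,x))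 dτ ). -/
open scoped BigOperators
open MeasureTheory

/-!
Jacobi's formula: since `det` is multilinear in the rows, `d/dt det M = ∑ᵢ det (M with row i
replaced by M'ᵢ)`, and for `M' = A M` expanding row `i` of `A M` in the rows of `M` leaves only
`Aᵢᵢ det M`, so `(det M)' = tr A · det M`. For `M = DₓX(·, x)` and `A = Dₓu(·, X(·, x))`, whose
trace is `div u`, the scalar `det DₓX(·, x)` thus solves `f' = (div u) f` with `f 0 = 1`; then
`f · exp (-∫ div u)` has zero right derivative, hence is constant.
-/

open Set Topology

namespace Matrix

theorem sum_det_updateRow_mul {R ι : Type*} [CommRing R] [Fintype ι] [DecidableEq ι]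
    (A M : Matrix ι ι R) :
    ∑ i, (M.updateRow i ((A * M) i)).det = A.trace * M.det := by
  have hrow : ∀ i, (A * M) i = ∑ k, A i k • M k := fun i => by
    ext j
    simp [mul_apply, Finset.sum_apply]
  simp only [hrow, det_updateRow_sum, trace, diag, Finset.sum_mul, smul_eq_mul]

variable {𝕜 ι : Type*} [NontriviallyNormedField 𝕜] [Fintype ι] [DecidableEq ι]

noncomputable def detRowContinuousMultilinear :
    ContinuousMultilinearMap 𝕜 (fun _ : ι => ι → 𝕜) 𝕜 where
  toMultilinearMap := (detRowAlternating : (ι → 𝕜) [⋀^ι]→ₗ[𝕜] 𝕜).toMultilinearMap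
  cont := continuous_id.matrix_det

theorem hasDerivWithinAt_det {M : 𝕜 → Matrix ι ι 𝕜} {M' : Matrix ι ι 𝕜} {s : Set 𝕜} {t : 𝕜}
    (hM : ∀ i j, HasDerivWithinAt (fun x => M x i j) (M' i j) s t) :
    HasDerivWithinAt (fun x => (M x).det) (∑ i, ((M t).updateRow i (M' i)).det) s t := by
  have hrows : ∀ i, HasFDerivWithinAt (fun x => M x i) ((1 : 𝕜 →L[𝕜] 𝕜).smulRight (M' i)) s t :=
    fun i => (hasDerivWithinAt_pi.2 (hM i)).hasFDerivWithinAt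
  refine (HasFDerivWithinAt.multilinear_comp (f := detRowContinuousMultilinear) hrows
    ).hasDerivWithinAt.congr_deriv ?_
  simp only [_root_.sum_apply, ContinuousLinearMap.comp_apply, ContinuousLinearMap.smulRight_apply,
    one_apply_eq_self, one_smul, ContinuousMultilinearMap.toContinuousLinearMap_apply]
  rfl

end Matrix

theorem ContinuousOn.hasDerivWithinAt_intervalIntegral_Ici {E : Type*} [NormedAddCommGroup E]
    [NormedSpace ℝ E] [CompleteSpace E] {g : ℝ → E} {a b s : ℝ} (hg : ContinuousOn g (Icc a b))
    (hs : s ∈ Ico a b) :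
    HasDerivWithinAt (fun t => ∫ τ in a..t, g τ) (g s) (Ici s) s := by
  have hIcc : Icc a b ∈ 𝓝[>] s :=
    Filter.mem_of_superset (Ioc_mem_nhdsGT_of_mem ⟨le_rfl, hs.2⟩)
      (Ioc_subset_Icc_self.trans (Icc_subset_Icc hs.1 le_rfl))
  have hint : IntervalIntegrable g volume a s :=
    (hg.mono (Icc_subset_Icc le_rfl hs.2.le)).intervalIntegrable_of_Icc hs.1
  exact intervalIntegral.integral_hasDerivWithinAt_right hint
    ⟨Icc a b, hIcc, hg.aestronglyMeasurable measurableSet_Icc⟩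
    ((hg s (Ico_subset_Icc_self hs)).mono_of_mem_nhdsWithin hIcc)

theorem eq_mul_exp_integral_of_hasDerivWithinAt {f g : ℝ → ℝ} {a b t : ℝ}
    (hg : ContinuousOn g (Icc a b))
    (hf : ∀ s ∈ Icc a b, HasDerivWithinAt f (g s * f s) (Icc a b) s) (ht : t ∈ Icc a b) :
    f t = f a * Real.exp (∫ s in a..t, g s) := by
  set G := fun t => ∫ s in a..t, g s
  have hG0 : G a = 0 := intervalIntegral.integral_same
  have hG_cont : ContinuousOn G (Icc a b) := by
    have hab : a ≤ b := ht.1.trans ht.2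
    simpa only [uIcc_of_le hab] using intervalIntegral.continuousOn_primitive_interval'
      (hg.intervalIntegrable_of_Icc hab) left_mem_uIcc
  have hf_cont : ContinuousOn f (Icc a b) := fun s hs => (hf s hs).continuousWithinAt
  have hconst : ∀ s ∈ Icc a b, f s * Real.exp (-G s) = f a * Real.exp (-G a) := by
    refine constant_of_has_deriv_right_zero (hf_cont.mul (hG_cont.neg.rexp)) fun s hs => ?_
    have hf_right := (hf s (Ico_subset_Icc_self hs)).mono_of_mem_nhdsWithin
      (Icc_mem_nhdsGE_of_mem hs)
    have hG_right := (hg.hasDerivWithinAt_intervalIntegral_Ici hs).fun_neg.exp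
    exact (hf_right.fun_mul hG_right).congr_deriv (by ring)
  calc f t = f t * Real.exp (-G t) * Real.exp (G t) := by
        rw [mul_assoc, ← Real.exp_add, neg_add_cancel, Real.exp_zero, mul_one]
    _ = f a * Real.exp (G t) := by
        rw [hconst t ht, hG0, neg_zero, Real.exp_zero, mul_one]

theorem Matrix.det_eq_det_mul_exp_integral_trace {ι : Type*} [Fintype ι] [DecidableEq ι]
    {M A : ℝ → Matrix ι ι ℝ} {a b t : ℝ} (hA : ContinuousOn (fun s => (A s).trace) (Icc a b))
    (hM : ∀ s ∈ Icc a b, ∀ i j,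
      HasDerivWithinAt (fun r => M r i j) ((A s * M s) i j) (Icc a b) s)
    (ht : t ∈ Icc a b) :
    (M t).det = (M a).det * Real.exp (∫ s in a..t, (A s).trace) :=
  eq_mul_exp_integral_of_hasDerivWithinAt hA
    (fun s hs => by simpa only [Matrix.sum_det_updateRow_mul] using
      Matrix.hasDerivWithinAt_det (hM s hs)) ht

theorem trace_jacM {n : ℕ} (F : (Fin n → ℝ) → (Fin n → ℝ)) (x : Fin n → ℝ) :
    (jacM F x).trace = vecDiv F x := rfl

theorem jacM_id {n : ℕ} (x : Fin n → ℝ) : jacM id x = 1 := by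
  ext i j
  show fderiv ℝ (ContinuousLinearMap.proj i : (Fin n → ℝ) →L[ℝ] ℝ) x (Pi.single j 1) =
    (1 : Matrix (Fin n) (Fin n) ℝ) i j
  rw [(ContinuousLinearMap.proj i : (Fin n → ℝ) →L[ℝ] ℝ).fderiv]
  simp [Matrix.one_apply, Pi.single_apply]

theorem liouville_jacobian_formula_general {n : ℕ} (T : ℝ)
    (u X : ℝ → (Fin n → ℝ) → (Fin n → ℝ))
    (hDu_cont : ∀ i j : Fin n, ContinuousOn
      (fun p : ℝ × (Fin n → ℝ) => jacM (u p.1) p.2 i j) (Set.Icc 0 T ×ˢ Set.univ))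
    (hX0 : ∀ x, X 0 x = x)
    (hXflow : ∀ t ∈ Set.Icc (0 : ℝ) T, ∀ x,
      HasDerivWithinAt (fun s => X s x) (u t (X t x)) (Set.Icc 0 T) t)
    (hDX_deriv : ∀ x, ∀ t ∈ Set.Icc (0 : ℝ) T, ∀ i j : Fin n,
      HasDerivWithinAt (fun s => jacM (X s) x i j)
        ((jacM (u t) (X t x) * jacM (X t) x) i j) (Set.Icc 0 T) t)
    (t : ℝ) (ht : t ∈ Set.Icc (0 : ℝ) T) (x : Fin n → ℝ) :
    (jacM (X t) x).det = Real.exp (∫ τ in (0 : ℝ)..t, vecDiv (u τ) (X τ x)) := by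
  have hX_cont : ContinuousOn (fun s => X s x) (Icc 0 T) :=
    fun s hs => (hXflow s hs x).continuousWithinAt
  have hdiv_cont : ContinuousOn (fun s => (jacM (u s) (X s x)).trace) (Icc 0 T) :=
    continuousOn_finsetSum _ fun i _ =>
      (hDu_cont i i).comp (continuousOn_id.prodMk hX_cont) fun s hs => ⟨hs, trivial⟩
  have hX_id : X 0 = id := funext hX0
  simpa only [hX_id, jacM_id, Matrix.det_one, one_mul, trace_jacM] using
    Matrix.det_eq_det_mul_exp_integral_trace hdiv_cont (hDX_deriv x) ht

/-- Liouville formula for the Jacobian of a flow: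
if `X` is a flow of `u` whose spatial Jacobian solves the linearized equation
`∂ₜDₓX = Dₓu(t,X)·DₓX`, then `det DₓX(t,x) = exp(∫₀ᵗ (div u)(τ, X(τ,x)) dτ)`. -/
theorem liouville_jacobian_formula {n : ℕ} (hn : 2 ≤ n) (T : ℝ) (hT : 0 < T)
    (u X : ℝ → (Fin n → ℝ) → (Fin n → ℝ))
    (hu_cont : ContinuousOn (fun p : ℝ × (Fin n → ℝ) => u p.1 p.2)
      (Set.Icc 0 T ×ˢ Set.univ))
    (hu_diff : ∀ t ∈ Set.Icc (0 : ℝ) T, Differentiable ℝ (u t))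
    (hDu_cont : ∀ i j : Fin n, ContinuousOn
      (fun p : ℝ × (Fin n → ℝ) => jacM (u p.1) p.2 i j) (Set.Icc 0 T ×ˢ Set.univ))
    (hX0 : ∀ x, X 0 x = x)
    (hXflow : ∀ t ∈ Set.Icc (0 : ℝ) T, ∀ x,
      HasDerivWithinAt (fun s => X s x) (u t (X t x)) (Set.Icc 0 T) t)
    (hX_diff : ∀ t ∈ Set.Icc (0 : ℝ) T, Differentiable ℝ (X t))
    (hDX_cont : ∀ i j : Fin n, ContinuousOn
      (fun p : ℝ × (Fin n → ℝ) => jacM (X p.1) p.2 i j) (Set.Icc 0 T ×ˢ Set.univ))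
    (hDX_deriv : ∀ x, ∀ t ∈ Set.Icc (0 : ℝ) T, ∀ i j : Fin n,
      HasDerivWithinAt (fun s => jacM (X s) x i j)
        ((jacM (u t) (X t x) * jacM (X t) x) i j) (Set.Icc 0 T) t)
    (t : ℝ) (ht : t ∈ Set.Icc (0 : ℝ) T) (x : Fin n → ℝ) :
    (jacM (X t) x).det = Real.exp (∫ τ in (0 : ℝ)..t, vecDiv (u τ) (X τ x)) :=
  liouville_jacobian_formula_general T u X hDu_cont hX0 hXflow hDX_deriv t ht x
end

section
/- Let n ≥ 2 and let X : ℝⁿ → ℝⁿ be a C² diffeomorphism whose Jacobian determinant J(x) = det DX(x) is positive everywhere. Let F : ℝⁿ → ℝⁿ be a C¹ vector field and set F̄ = F ∘ X. Then for every x ∈ ℝⁿ, (div F)(X(x)) = J(x)⁻¹ div( adj(DX) F̄ )(x), where adj(DX) F̄ denotes the pointwise matrix–vector product and div on the right is the usual divergence of a vector field. In particular, div F ≡ 0 if and only if div( adj(DX) F̄ ) ≡ 0. -/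
open scoped BigOperators
open MeasureTheory

/-! By Cramer's rule `∑ⱼ adj(DX)ᵢⱼ F̄ⱼ` is the determinant of `DX` with its `i`-th column replaced
by `F̄`. Differentiating this determinant column by column (Jacobi's formula), the terms in which
the column `∂ₗX` is differentiated in the direction `i` cancel in pairs `(i, l)`, `(l, i)`: the
columns `∂ᵢ∂ₗX = ∂ₗ∂ᵢX` agree and the determinant is alternating (the Piola identity). What
remains is `tr (adj(DX) DF̄) = tr (adj(DX) DF(X) DX) = det(DX) tr DF(X)` by the chain rule. -/

open Finset
open scoped Matrix

section Algebra

variable {ι R : Type*} [Fintype ι] [DecidableEq ι] [CommRing R]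

theorem Matrix.det_updateCol_updateCol_swap (A : Matrix ι ι R) {i l : ι} (h : i ≠ l)
    (u v : ι → R) :
    ((A.updateCol i u).updateCol l v).det = -((A.updateCol l u).updateCol i v).det := by
  have hswap : ((A.updateCol l u).updateCol i v).submatrix id (Equiv.swap i l)
      = (A.updateCol i u).updateCol l v := by
    ext k m
    rcases eq_or_ne m i with rfl | hmi
    · simp [h, h.symm]
    rcases eq_or_ne m l with rfl | hml
    · simp
    · simp [Equiv.swap_apply_of_ne_of_ne hmi hml, hmi, hml]
  rw [← hswap, Matrix.det_permute', Equiv.Perm.sign_swap h]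
  simp

theorem Matrix.sum_det_updateCol_eq_trace_adjugate_mul (A C : Matrix ι ι R) :
    ∑ i, (A.updateCol i fun k => C k i).det = (A.adjugate * C).trace := by
  refine sum_congr rfl fun i _ => ?_
  rw [← Matrix.cramer_apply, Matrix.cramer_eq_adjugate_mulVec]
  rfl

theorem Matrix.trace_adjugate_mul_mul_self (A B : Matrix ι ι R) :
    (A.adjugate * (B * A)).trace = A.det * B.trace := by
  rw [Matrix.trace_mul_comm, Matrix.mul_assoc, Matrix.mul_adjugate, Matrix.mul_smul,
    Matrix.mul_one, Matrix.trace_smul, smul_eq_mul]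

theorem Finset.sum_sum_erase_eq_zero_of_antisymm {M : Type*} [AddCommGroup M] (T : ι → ι → M)
    (hT : ∀ i l, i ≠ l → T i l = -T l i) : ∑ i, ∑ l ∈ univ.erase i, T i l = 0 := by
  rw [sum_sigma']
  refine sum_involution (fun p _ => ⟨p.2, p.1⟩) ?_ ?_ ?_ ?_
  · rintro ⟨i, l⟩ hp
    simp [hT i l (mem_erase.mp (mem_sigma.mp hp).2).1.symm]
  · rintro ⟨i, l⟩ hp _ h
    exact (mem_erase.mp (mem_sigma.mp hp).2).1 (Sigma.mk.inj_iff.mp h).1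
  · rintro ⟨i, l⟩ hp
    simpa [eq_comm] using (mem_sigma.mp hp).2
  · rintro ⟨i, l⟩ _
    rfl

end Algebra

section Calculus

variable {𝕜 E ι : Type*} [NontriviallyNormedField 𝕜] [NormedAddCommGroup E] [NormedSpace 𝕜 E]
  [Fintype ι] [DecidableEq ι]

theorem fderiv_det_apply {M : E → Matrix ι ι 𝕜} {x : E}
    (hM : ∀ k l, DifferentiableAt 𝕜 (fun y => M y k l) x) (v : E) :
    fderiv 𝕜 (fun y => (M y).det) x v
      = ∑ l, ((M x).updateCol l fun k => fderiv 𝕜 (fun y => M y k l) x v).det := by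
  have hdet : HasFDerivAt (fun y => (M y).det)
      (∑ σ : Equiv.Perm ι, (Equiv.Perm.sign σ : 𝕜) •
        ∑ l, (∏ m ∈ univ.erase l, M x (σ m) m) • fderiv 𝕜 (fun y => M y (σ l) l) x) x := by
    simp_rw [Matrix.det_apply']
    exact HasFDerivAt.fun_sum fun σ _ =>
      (HasFDerivAt.finsetProd fun m _ => (hM (σ m) m).hasFDerivAt).const_mul _
  rw [hdet.fderiv]
  simp only [_root_.sum_apply, FunLike.coe_smul, Pi.smul_apply, smul_eq_mul, mul_sum,
    Matrix.det_apply']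
  rw [sum_comm]
  refine sum_congr rfl fun l _ => sum_congr rfl fun σ _ => ?_
  rw [← mul_prod_erase univ _ (mem_univ l), Matrix.updateCol_self, mul_comm (∏ _ ∈ _, _)]
  congr 2
  refine prod_congr rfl fun m hm => ?_
  rw [Matrix.updateCol_ne (mem_erase.mp hm).1]

end Calculus

section Jacobian

variable {n : ℕ} {x : Fin n → ℝ}

theorem vecDiv_eq_trace_jacM (F : (Fin n → ℝ) → Fin n → ℝ) (x : Fin n → ℝ) :
    vecDiv F x = (jacM F x).trace :=
  rfl

theorem jacM_eq_toMatrix' {F : (Fin n → ℝ) → Fin n → ℝ} (hF : DifferentiableAt ℝ F x) :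
    jacM F x = LinearMap.toMatrix' (fderiv ℝ F x : (Fin n → ℝ) →ₗ[ℝ] Fin n → ℝ) := by
  ext i j
  simp [jacM, pd, fderiv_apply hF]

theorem jacM_comp {F e : (Fin n → ℝ) → Fin n → ℝ} (hF : DifferentiableAt ℝ F (e x))
    (he : DifferentiableAt ℝ e x) :
    jacM (fun y => F (e y)) x = jacM F (e x) * jacM e x := by
  change jacM (F ∘ e) x = _
  rw [jacM_eq_toMatrix' (hF.comp x he), jacM_eq_toMatrix' hF, jacM_eq_toMatrix' he,
    ← LinearMap.toMatrix'_comp, fderiv_comp x hF he]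
  rfl

theorem differentiableAt_jacM_apply {e : (Fin n → ℝ) → Fin n → ℝ} (he : ContDiffAt ℝ 2 e x)
    (k l : Fin n) : DifferentiableAt ℝ (fun y => jacM e y k l) x :=
  (((contDiffAt_pi.mp he k).fderiv_right (m := 1) le_rfl).differentiableAt one_ne_zero).clm_apply
    (differentiableAt_const _)

theorem pd_jacM_apply_comm {e : (Fin n → ℝ) → Fin n → ℝ} (he : ContDiffAt ℝ 2 e x)
    (i l k : Fin n) : pd i (fun y => jacM e y k l) x = pd l (fun y => jacM e y k i) x := by
  have hek := contDiffAt_pi.mp he k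
  have hd := (hek.fderiv_right (m := 1) le_rfl).differentiableAt one_ne_zero
  simp only [jacM, Matrix.of_apply, pd]
  rw [fderiv_clm_apply hd (differentiableAt_const _), fderiv_clm_apply hd (differentiableAt_const _)]
  simpa using hek.isSymmSndFDerivAt (by simp) (Pi.single i 1) (Pi.single l 1)

theorem vecDiv_adjugate_jacM_mulVec {e G : (Fin n → ℝ) → Fin n → ℝ} (he : ContDiffAt ℝ 2 e x)
    (hG : DifferentiableAt ℝ G x) :
    vecDiv (fun y => (jacM e y).adjugate *ᵥ G y) x = ((jacM e x).adjugate * jacM G x).trace := by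
  set A := jacM e x
  have hcramer : ∀ i, (fun y => ((jacM e y).adjugate *ᵥ G y) i)
      = fun y => ((jacM e y).updateCol i (G y)).det := fun i => funext fun y => by
    rw [← Matrix.cramer_eq_adjugate_mulVec, Matrix.cramer_apply]
  have hentry : ∀ i k l, DifferentiableAt ℝ (fun y => (jacM e y).updateCol i (G y) k l) x := by
    intro i k l
    rcases eq_or_ne l i with rfl | hli
    · simpa using differentiableAt_pi.mp hG k
    · simpa [Matrix.updateCol_ne hli] using differentiableAt_jacM_apply he k l
  let T i l := ((A.updateCol i (G x)).updateCol l fun k => pd i (fun y => jacM e y k l) x).det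
  have hpd : ∀ i, pd i (fun y => ((jacM e y).updateCol i (G y)).det) x
      = (A.updateCol i fun k => jacM G x k i).det + ∑ l ∈ univ.erase i, T i l := by
    intro i
    rw [pd, fderiv_det_apply (hentry i), ← add_sum_erase _ _ (mem_univ i)]
    congr 1
    · simp only [Matrix.updateCol_self, Matrix.updateCol_idem]
      rfl
    · refine sum_congr rfl fun l hl => ?_
      simp only [Matrix.updateCol_ne (mem_erase.mp hl).1]
      rfl
  have hT : ∀ i l, i ≠ l → T i l = -T l i := by
    intro i l h
    simp only [T, pd_jacM_apply_comm he i l]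
    exact Matrix.det_updateCol_updateCol_swap A h _ _
  simp only [vecDiv, hcramer, hpd, sum_add_distrib, sum_sum_erase_eq_zero_of_antisymm T hT,
    add_zero, Matrix.sum_det_updateCol_eq_trace_adjugate_mul]

theorem vecDiv_adjugate_jacM_mulVec_comp {e F : (Fin n → ℝ) → Fin n → ℝ}
    (he : ContDiffAt ℝ 2 e x) (hF : DifferentiableAt ℝ F (e x)) :
    vecDiv (fun y => (jacM e y).adjugate *ᵥ F (e y)) x = (jacM e x).det * vecDiv F (e x) := by
  have he₁ : DifferentiableAt ℝ e x := he.differentiableAt two_ne_zero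
  rw [vecDiv_adjugate_jacM_mulVec (G := fun y => F (e y)) he (hF.comp x he₁), jacM_comp hF he₁,
    Matrix.trace_adjugate_mul_mul_self, vecDiv_eq_trace_jacM]

end Jacobian

theorem div_lagrangian_change_of_variables_general {n : ℕ}
    (e : (Fin n → ℝ) ≃ (Fin n → ℝ))
    (hX : ContDiff ℝ 2 ⇑e)
    (hJ : ∀ x, 0 < (jacM (⇑e) x).det)
    (F : (Fin n → ℝ) → (Fin n → ℝ)) (hF : ContDiff ℝ 1 F) :
    (∀ x, vecDiv F (e x)
        = ((jacM (⇑e) x).det)⁻¹ *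
            ∑ i, pd i (fun y => ∑ j, (jacM (⇑e) y).adjugate i j * F (e y) j) x)
    ∧ ((∀ y, vecDiv F y = 0) ↔
        (∀ x, ∑ i, pd i (fun y => ∑ j, (jacM (⇑e) y).adjugate i j * F (e y) j) x = 0)) := by
  have key : ∀ x, ∑ i, pd i (fun y => ∑ j, (jacM (⇑e) y).adjugate i j * F (e y) j) x
      = (jacM e x).det * vecDiv F (e x) := fun x =>
    vecDiv_adjugate_jacM_mulVec_comp hX.contDiffAt (hF.differentiable one_ne_zero _)
  refine ⟨fun x => ?_, fun h x => ?_, fun h y => ?_⟩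
  · rw [key x, inv_mul_cancel_left₀ (hJ x).ne']
  · rw [key x, h (e x), mul_zero]
  · simpa [key, (hJ _).ne'] using h (e.symm y)

/-- for a C² diffeomorphism `X` with positive Jacobian determinant `J`
and a C¹ vector field `F` with `F̄ = F ∘ X`, one has
`(div F) ∘ X = J⁻¹ div(adj(DX) F̄)`; in particular `div F ≡ 0` iff
`div(adj(DX) F̄) ≡ 0`. -/
theorem div_lagrangian_change_of_variables {n : ℕ} (hn : 2 ≤ n)
    (e : (Fin n → ℝ) ≃ (Fin n → ℝ))
    (hX : ContDiff ℝ 2 ⇑e) (hXinv : ContDiff ℝ 2 ⇑e.symm)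
    (hJ : ∀ x, 0 < (jacM (⇑e) x).det)
    (F : (Fin n → ℝ) → (Fin n → ℝ)) (hF : ContDiff ℝ 1 F) :
    (∀ x, vecDiv F (e x)
        = ((jacM (⇑e) x).det)⁻¹ *
            ∑ i, pd i (fun y => ∑ j, (jacM (⇑e) y).adjugate i j * F (e y) j) x)
    ∧ ((∀ y, vecDiv F y = 0) ↔
        (∀ x, ∑ i, pd i (fun y => ∑ j, (jacM (⇑e) y).adjugate i j * F (e y) j) x = 0)) :=
  div_lagrangian_change_of_variables_general e hX hJ F hF
end
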